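/- arXiv:2109.01311 — 3 statements merged into one kernel-verified Lean document; each statement's English description precedes it below -/
import Mathlib

section
/- Let G be an n-vertex connected graph with minimum degree at least D > 0. Then the diameter of G is at most 3n/D. -/
open SimpleGraph Finset

lemma drop_length {V : Type*} {G : SimpleGraph V} {u v : V} (p : G.Walk u v) (n : ℕ) :
    (p.drop n).length = p.length - n := by
  induction p generalizing n with
  | nil => simp [SimpleGraph.Walk.drop]
  | cons h q ih =>
    cases n with
    | zero => simp [SimpleGraph.Walk.drop]
    | succ m => simp [SimpleGraph.Walk.drop, ih, Nat.succ_sub_succ]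

lemma dist_getVert_le {V : Type*} {G : SimpleGraph V} (hG : G.Connected) {u v : V}
    (p : G.Walk u v) (i : ℕ) : G.dist u (p.getVert i) ≤ i := by
  induction p generalizing i with
  | @nil w =>
    show G.dist w w ≤ i
    rw [SimpleGraph.dist_self]; omega
  | @cons a b c h q ih =>
    cases i with
    | zero =>
      show G.dist a a ≤ 0
      rw [SimpleGraph.dist_self]
    | succ m =>
      calc G.dist _ _ ≤ G.dist _ _ + G.dist _ (q.getVert m) := hG.dist_triangle
        _ ≤ 1 + m := by
            gcongr
            · exact G.dist_le h.toWalk |>.trans (by simp)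
            · exact ih m
        _ = m + 1 := by omega

/-- An `n`-vertex connected graph with minimum degree at least `D > 0`
has diameter at most `3n/D`. -/
theorem stmt_2 {V : Type*} [Fintype V] (G : SimpleGraph V) (n D : ℕ)
    (hn : Fintype.card V = n) (hG : G.Connected) (hD : 0 < D)
    (hdeg : ∀ v : V, D ≤ (G.neighborSet v).ncard) :
    ∀ u v : V, (G.dist u v : ℝ) ≤ 3 * n / D := by
  classical
  intro u v
  set d := G.dist u v with hd
  obtain ⟨p, hp⟩ := (hG u v).exists_walk_length_eq_dist
  -- dist u (getVert t) = t for t ≤ d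
  have hdistle : ∀ i, G.dist u (p.getVert i) ≤ i := dist_getVert_le hG p
  have hdistge : ∀ t, t ≤ d → t ≤ G.dist u (p.getVert t) := by
    intro t ht
    have h1 : G.dist (p.getVert t) v ≤ d - t := by
      have := G.dist_le (p.drop t)
      rwa [drop_length, hp] at this
    have h2 : d ≤ G.dist u (p.getVert t) + G.dist (p.getVert t) v := hG.dist_triangle
    omega
  set k := d / 3 with hk
  -- pairwise distance ≥ 3
  have hfar : ∀ i j, i < j → j ≤ k → 3 ≤ G.dist (p.getVert (3*i)) (p.getVert (3*j)) := by
    intro i j hij hj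
    have h3i : 3 * i ≤ d := by omega
    have h3j : 3 * j ≤ d := by omega
    have := hG.dist_triangle (u := u) (v := p.getVert (3*i)) (w := p.getVert (3*j))
    have e1 := hdistge _ h3j
    have e2 := hdistle (3*i)
    omega
  set f : ℕ → Finset V := fun i => insert (p.getVert (3*i)) (G.neighborFinset (p.getVert (3*i))) with hf
  have hcard : ∀ i, D + 1 ≤ (f i).card := by
    intro i
    have hv : p.getVert (3*i) ∉ G.neighborFinset (p.getVert (3*i)) := by simp
    rw [hf]
    simp only [Finset.card_insert_of_notMem hv]
    have : D ≤ (G.neighborFinset (p.getVert (3*i))).card := by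
      have := hdeg (p.getVert (3*i))
      rwa [Set.ncard_eq_toFinset_card', ← SimpleGraph.neighborFinset_def] at this
    omega
  have hdisj : ∀ i ∈ Finset.range (k+1), ∀ j ∈ Finset.range (k+1), i ≠ j →
      Disjoint (f i) (f j) := by
    have key : ∀ i j, i < j → j ≤ k → Disjoint (f i) (f j) := by
      intro i j hij hj
      rw [Finset.disjoint_left]
      intro x hxi hxj
      have d1 : G.dist (p.getVert (3*i)) x ≤ 1 := by
        rw [hf] at hxi; simp only [Finset.mem_insert, SimpleGraph.mem_neighborFinset] at hxi
        rcases hxi with rfl | h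
        · rw [SimpleGraph.dist_self]; omega
        · exact (G.dist_le h.toWalk).trans (by simp)
      have d2 : G.dist x (p.getVert (3*j)) ≤ 1 := by
        rw [hf] at hxj; simp only [Finset.mem_insert, SimpleGraph.mem_neighborFinset] at hxj
        rcases hxj with rfl | h
        · rw [SimpleGraph.dist_self]; omega
        · exact (G.dist_le h.symm.toWalk).trans (by simp)
      have := hG.dist_triangle (u := p.getVert (3*i)) (v := x) (w := p.getVert (3*j))
      have := hfar i j hij hj
      omega
    intro i hi j hj hne
    simp only [Finset.mem_range] at hi hj
    rcases lt_or_gt_of_ne hne with h | h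
    · exact key i j h (by omega)
    · exact (key j i h (by omega)).symm
  have hcount : (k+1) * (D+1) ≤ n := by
    calc (k+1) * (D+1) = ∑ i ∈ Finset.range (k+1), (D+1) := by simp [mul_comm]
      _ ≤ ∑ i ∈ Finset.range (k+1), (f i).card := Finset.sum_le_sum fun i _ => hcard i
      _ = ((Finset.range (k+1)).biUnion f).card := (Finset.card_biUnion hdisj).symm
      _ ≤ Fintype.card V := Finset.card_le_card (Finset.subset_univ _)
      _ = n := hn
  -- finish with real arithmetic
  have hdk : d ≤ 3*k + 2 := by omega
  have hDpos : (0:ℝ) < D := by exact_mod_cast hD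
  have hnat : d * D ≤ 3 * n := by
    calc d * D ≤ (3*k+2) * D := Nat.mul_le_mul_right _ hdk
      _ ≤ (k+1) * (D+1) * 3 := by nlinarith
      _ ≤ n * 3 := Nat.mul_le_mul_right _ hcount
      _ = 3 * n := by ring
  rw [le_div_iff₀ hDpos]
  exact_mod_cast hnat
end

section
/- Let 2 > α > β > 1 be reals and let ℓ_0 = ⌊log_β ((2−β)(α−1)/(α−β))⌋ + 2. Let b_i = (α−1)/(β−1) + (1/β)^{i−1}(α−1 − (α−1)/(β−1)) for i ≥ 1. Then b_{ℓ_0} > 1. -/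
/-- For `2 > α > β > 1`, `ℓ_0 = ⌊log_β((2−β)(α−1)/(α−β))⌋ + 2` and
`b_i = (α−1)/(β−1) + (1/β)^{i−1}(α−1−(α−1)/(β−1))`, we have `b_{ℓ_0} > 1`. -/
theorem stmt_8 (α β : ℝ) (hα : α < 2) (hβα : β < α) (hβ : 1 < β)
    (ℓ₀ : ℕ) (hℓ₀ : ℓ₀ = ⌊Real.logb β ((2 - β) * (α - 1) / (α - β))⌋₊ + 2)
    (b : ℕ → ℝ)
    (hb : ∀ i : ℕ, 1 ≤ i →
      b i = (α - 1) / (β - 1) + (1 / β) ^ (i - 1) * (α - 1 - (α - 1) / (β - 1))) :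
    1 < b ℓ₀ := by
  have hβ0 : (0:ℝ) < β := by linarith
  have hβ1 : (0:ℝ) < β - 1 := by linarith
  set X : ℝ := (2 - β) * (α - 1) / (α - β) with hX
  have hXpos : 0 < X := by
    apply div_pos (by nlinarith) (by linarith)
  have hn : ℓ₀ - 1 = ⌊Real.logb β X⌋₊ + 1 := by omega
  have key : X < β ^ (ℓ₀ - 1) := by
    have h1 : Real.logb β X < ((ℓ₀ - 1 : ℕ) : ℝ) := by
      rw [hn]
      push_cast
      exact Nat.lt_floor_add_one _
    calc X = β ^ Real.logb β X := (Real.rpow_logb hβ0 (ne_of_gt hβ) hXpos).symm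
    _ < β ^ ((ℓ₀ - 1 : ℕ) : ℝ) := by
        exact (Real.rpow_lt_rpow_left_iff hβ).mpr h1
    _ = β ^ (ℓ₀ - 1) := Real.rpow_natCast β _
  rw [hb ℓ₀ (by omega)]
  set P : ℝ := β ^ (ℓ₀ - 1) with hP
  have hPinv : (1/β) ^ (ℓ₀ - 1) = P⁻¹ := by
    rw [one_div, inv_pow]
  rw [hPinv]
  have hPpos : 0 < P := pow_pos hβ0 _
  have hmul : P * P⁻¹ = 1 := mul_inv_cancel₀ hPpos.ne'
  have hXP : X * (α - β) = (2 - β) * (α - 1) := by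
    rw [hX, div_mul_cancel₀ _ (by linarith : α - β ≠ 0)]
  have h2 : (2 - β) * (α - 1) < P * (α - β) := by
    nlinarith [mul_lt_mul_of_pos_right key (show (0:ℝ) < α - β by linarith)]
  rw [← sub_pos]
  have expand : (α - 1) / (β - 1) + P⁻¹ * (α - 1 - (α - 1) / (β - 1)) - 1
      = (P * (α - β) - (2 - β) * (α - 1)) / (P * (β - 1)) := by
    field_simp
    ring
  rw [expand]
  exact div_pos (by linarith) (mul_pos hPpos hβ1)
end

section
/- For every ε > 0 and integer ℓ ≥ 2 odd, there exists t_0 such that for all t ≥ t_0 and all sufficiently large m ≤ n, the Zarankiewicz number satisfies z(m, n, θ_{t,ℓ}) ≥ c·(mn)^{(ℓ+1)/(2ℓ) − ε} for some constant c > 0, where θ_{t,ℓ} is the theta graph consisting of t internally disjoint paths of length ℓ between two fixed vertices. -/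
/-- The theta graph `θ_{t,ℓ}`: `t` internally disjoint paths of length `ℓ` between two
fixed vertices (`Sum.inl false` and `Sum.inl true`); `Sum.inr (i, j)` is the `j`-th internal
vertex of the `i`-th path. -/
def thetaGraph (t ℓ : ℕ) : SimpleGraph (Bool ⊕ Fin t × Fin (ℓ - 1)) :=
  SimpleGraph.fromRel fun a b =>
    match a, b with
    | Sum.inl false, Sum.inr (_, j) => j.val = 0
    | Sum.inl true, Sum.inr (_, j) => j.val = ℓ - 2
    | Sum.inr (i, j), Sum.inr (i', j') => i = i' ∧ j'.val = j.val + 1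
    | _, _ => False

/-- A graph `G` contains a copy of `F` if there is an injective map preserving adjacency. -/
def ContainsCopy {W V : Type*} (F : SimpleGraph W) (G : SimpleGraph V) : Prop :=
  ∃ f : W → V, Function.Injective f ∧ ∀ x y, F.Adj x y → G.Adj (f x) (f y)

/-!
Keep each edge of `K_{m,n}` independently with probability `p = (mn)^(-β) / 4`, where
`ℓ = 2q + 1` and `β = tq / (tℓ - 1)`. Since `θ_{t,ℓ}` is connected, its proper 2-colouring is
unique up to swapping the colours, and both classes have `1 + tq` vertices; so `K_{m,n}` contains
at most `2 (mn)^(1 + tq)` copies of it, each using `tℓ` edges. The choice of `β` makes the expected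
number of edges, `mn p`, and the expected number of copies, at most `2 (mn)^(1 + tq) p^(tℓ)`, both
of order `(mn)^(1 - β)`, and their difference is at least `(mn)^(1 - β) / 8`. Deleting one edge from
every copy in a good outcome leaves a `θ_{t,ℓ}`-free graph with that many edges, and
`1 - β ≥ (ℓ + 1) / (2ℓ) - ε` as soon as `t ≥ 1 / ε`.
-/

open Finset

section FirstMoment

variable {α : Type*} [DecidableEq α] {p : ℝ}

lemma exists_subset_forall_not_subset {ι : Type*} [Fintype ι] (S : Finset α) (E : ι → Finset α)
    (hE : ∀ x, (E x).Nonempty) :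
    ∃ S' ⊆ S, #S ≤ #S' + #{x | E x ⊆ S} ∧ ∀ x, ¬ E x ⊆ S' := by
  choose pick hpick using hE
  set D := image pick {x | E x ⊆ S}
  refine ⟨S \ D, sdiff_subset, card_le_card_sdiff_add_card.trans (by gcongr; exact card_image_le),
    fun x hx => ?_⟩
  have hxD : pick x ∈ D := mem_image_of_mem pick (mem_filter.2 ⟨mem_univ x, hx.trans sdiff_subset⟩)
  exact (mem_sdiff.1 (hx (hpick x))).2 hxD

variable [Fintype α]

/-- The probability that the random subset of `α` containing each element independently with
probability `p` is `S`. -/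
def bernoulliWeight (p : ℝ) (S : Finset α) : ℝ := p ^ #S * (1 - p) ^ #Sᶜ

lemma bernoulliWeight_nonneg (hp0 : 0 ≤ p) (hp1 : p ≤ 1) (S : Finset α) :
    0 ≤ bernoulliWeight p S := by
  have : 0 ≤ 1 - p := by linarith
  unfold bernoulliWeight; positivity

lemma sum_bernoulliWeight_ite_subset (p : ℝ) (T : Finset α) :
    ∑ S, (if T ⊆ S then bernoulliWeight p S else 0) = p ^ #T := by
  set g : α → ℝ := fun a => if a ∉ T then 1 - p else 0
  have hterm (S : Finset α) :
      (if T ⊆ S then bernoulliWeight p S else 0) = (∏ _a ∈ S, p) * ∏ a ∈ univ \ S, g a := by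
    have hsub : (∀ a ∈ Sᶜ, a ∉ T) ↔ T ⊆ S := by
      simp only [mem_compl]
      exact ⟨fun h a haT => by_contra fun haS => h a haS haT, fun h a haS haT => haS (h haT)⟩
    simp only [g, prod_ite_zero, prod_const, ← compl_eq_univ_sdiff, hsub]
    split_ifs <;> simp [bernoulliWeight]
  calc ∑ S, (if T ⊆ S then bernoulliWeight p S else 0)
      = ∑ S ∈ univ.powerset, (∏ _a ∈ S, p) * ∏ a ∈ univ \ S, g a := by
        rw [powerset_univ]; exact sum_congr rfl fun S _ => hterm S
    _ = ∏ a, (p + g a) := (prod_add _ _ _).symm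
    _ = p ^ #T := by
        simp only [g, add_ite, add_sub_cancel, add_zero, ite_not, prod_ite_mem, univ_inter,
          prod_const]

lemma sum_bernoulliWeight_mul_card_filter_subset {ι : Type*} [Fintype ι] (p : ℝ)
    (E : ι → Finset α) :
    ∑ S, bernoulliWeight p S * #{x | E x ⊆ S} = ∑ x, p ^ #(E x) := by
  simp_rw [card_filter, Nat.cast_sum, mul_sum, Nat.cast_ite, Nat.cast_one, Nat.cast_zero,
    mul_ite, mul_one, mul_zero]
  rw [sum_comm]
  exact sum_congr rfl fun x _ => sum_bernoulliWeight_ite_subset p (E x)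

lemma sum_bernoulliWeight_mul_card (p : ℝ) :
    ∑ S : Finset α, bernoulliWeight p S * #S = Fintype.card α * p := by
  have h := sum_bernoulliWeight_mul_card_filter_subset p (fun a : α => {a})
  simp only [singleton_subset_iff, filter_mem_eq_inter, univ_inter, card_singleton, pow_one,
    sum_const, card_univ, nsmul_eq_mul] at h
  exact h

lemma exists_sum_bernoulliWeight_mul_le (hp0 : 0 ≤ p) (hp1 : p ≤ 1) (f : Finset α → ℝ) :
    ∃ S, ∑ T, bernoulliWeight p T * f T ≤ f S := by
  obtain ⟨S, -, hS⟩ := exists_max_image univ f univ_nonempty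
  refine ⟨S, ?_⟩
  calc ∑ T, bernoulliWeight p T * f T ≤ ∑ T, bernoulliWeight p T * f S :=
        sum_le_sum fun T _ => mul_le_mul_of_nonneg_left (hS T (mem_univ T))
          (bernoulliWeight_nonneg hp0 hp1 T)
    _ = f S := by
        rw [← sum_mul]
        simpa using congrArg (· * f S) (sum_bernoulliWeight_ite_subset p (∅ : Finset α))

theorem exists_card_le_forall_not_subset {ι : Type*} [Fintype ι] (E : ι → Finset α) {k : ℕ}
    (hk : 0 < k) (hE : ∀ x, k ≤ #(E x)) (hp0 : 0 ≤ p) (hp1 : p ≤ 1) :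
    ∃ S : Finset α, Fintype.card α * p - Fintype.card ι * p ^ k ≤ #S ∧ ∀ x, ¬ E x ⊆ S := by
  obtain ⟨S, hS⟩ := exists_sum_bernoulliWeight_mul_le hp0 hp1
    (fun S => (#S : ℝ) - #{x | E x ⊆ S})
  obtain ⟨S', -, hcard, hfree⟩ := exists_subset_forall_not_subset S E
    (fun x => card_pos.1 (hk.trans_le (hE x)))
  refine ⟨S', ?_, hfree⟩
  have hmean : Fintype.card α * p - Fintype.card ι * p ^ k
      ≤ ∑ T, bernoulliWeight p T * ((#T : ℝ) - #{x | E x ⊆ T}) := by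
    simp only [mul_sub, sum_sub_distrib, sum_bernoulliWeight_mul_card,
      sum_bernoulliWeight_mul_card_filter_subset]
    gcongr
    calc ∑ x, p ^ #(E x) ≤ ∑ _x : ι, p ^ k :=
          sum_le_sum fun x _ => pow_le_pow_of_le_one hp0 hp1 (hE x)
      _ = Fintype.card ι * p ^ k := by simp
  have : (#S : ℝ) ≤ #S' + #{x | E x ⊆ S} := by exact_mod_cast hcard
  linarith

end FirstMoment

namespace SimpleGraph

variable {V W : Type*} {H : SimpleGraph V}

def spanningSubgraph (H : SimpleGraph V) (S : Finset H.edgeSet) : SimpleGraph V :=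
  fromEdgeSet (Subtype.val '' (S : Set H.edgeSet))

lemma edgeSet_spanningSubgraph (S : Finset H.edgeSet) :
    (H.spanningSubgraph S).edgeSet = Subtype.val '' (S : Set H.edgeSet) := by
  rw [spanningSubgraph, edgeSet_fromEdgeSet, sdiff_eq_left, Set.disjoint_left]
  rintro _ ⟨e, -, rfl⟩
  exact not_isDiag_of_mem_edgeSet H e.2

lemma spanningSubgraph_le (S : Finset H.edgeSet) : H.spanningSubgraph S ≤ H := by
  rw [← edgeSet_subset_edgeSet, edgeSet_spanningSubgraph]
  exact Set.image_subset_iff.2 fun e _ => e.2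

lemma ncard_edgeSet_spanningSubgraph (S : Finset H.edgeSet) :
    (H.spanningSubgraph S).edgeSet.ncard = #S := by
  rw [edgeSet_spanningSubgraph, Set.ncard_image_of_injective _ Subtype.val_injective,
    Set.ncard_coe_finset]

lemma map_mapEdgeSet_subset {F : SimpleGraph W} [Fintype F.edgeSet] {S : Finset H.edgeSet}
    (f : Copy F (H.spanningSubgraph S)) :
    univ.map ((Copy.ofLE _ _ (spanningSubgraph_le S)).comp f).mapEdgeSet ⊆ S := by
  intro _ he
  obtain ⟨e, -, rfl⟩ := mem_map.1 he
  have hmem : (f.mapEdgeSet e : Sym2 V) ∈ Subtype.val '' (S : Set H.edgeSet) :=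
    edgeSet_spanningSubgraph S ▸ (f.mapEdgeSet e).2
  obtain ⟨e', he', he'e⟩ := hmem
  have : ((Copy.ofLE _ _ (spanningSubgraph_le S)).comp f).mapEdgeSet e = e' :=
    Subtype.ext he'e.symm
  exact this ▸ he'

theorem exists_free_le_ncard_edgeSet_ge [Fintype V] [Finite W] (F : SimpleGraph W)
    (H : SimpleGraph V) {k : ℕ} (hk : 0 < k) (hF : k ≤ Nat.card F.edgeSet) {p : ℝ}
    (hp0 : 0 ≤ p) (hp1 : p ≤ 1) :
    ∃ G ≤ H, F.Free G ∧
      Nat.card H.edgeSet * p - Nat.card (Copy F H) * p ^ k ≤ G.edgeSet.ncard := by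
  classical
  have : Fintype W := Fintype.ofFinite W
  have : Finite (Copy F H) :=
    Finite.of_injective Copy.toHom fun f g h => Copy.ext fun a => DFunLike.congr_fun h a
  have : Fintype (Copy F H) := Fintype.ofFinite _
  obtain ⟨S, hS, hfree⟩ := exists_card_le_forall_not_subset
    (fun f : Copy F H => univ.map f.mapEdgeSet) hk
    (fun f => by simpa [← Nat.card_eq_fintype_card] using hF) hp0 hp1
  refine ⟨H.spanningSubgraph S, spanningSubgraph_le S,
    fun ⟨f⟩ => hfree _ (map_mapEdgeSet_subset f), ?_⟩
  rw [ncard_edgeSet_spanningSubgraph, Nat.card_eq_fintype_card, Nat.card_eq_fintype_card]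
  exact hS

lemma natCard_edgeSet_completeBipartiteGraph (α β : Type*) :
    Nat.card (completeBipartiteGraph α β).edgeSet = Nat.card α * Nat.card β := by
  rw [Nat.card_coe_set_eq, Set.ncard_def, encard_edgeSet_completeBipartiteGraph, ENat.toNat_mul]
  rfl

end SimpleGraph

lemma Fintype.card_subtype_forall_isRight_eq {W α β : Type*} [Fintype W] [DecidableEq W]
    [Fintype α] [Fintype β] (g : W → Bool) :
    Fintype.card {φ : W → α ⊕ β // ∀ v, (φ v).isRight = g v} =
      ∏ v, if g v then Fintype.card β else Fintype.card α := by
  rw [Fintype.card_congr (Equiv.subtypePiEquivPi (β := fun _ => α ⊕ β)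
    (p := fun v x => x.isRight = g v)), Fintype.card_pi]
  refine Finset.prod_congr rfl fun v _ => ?_
  cases g v
  · simpa using Fintype.card_congr (Equiv.sumIsLeft (α := α) (β := β))
  · exact Fintype.card_congr Equiv.sumIsRight

lemma Finset.prod_range_ite_even {M : Type*} [CommMonoid M] (a b : M) (q : ℕ) :
    ∏ j ∈ range (2 * q), (if Even j then a else b) = (a * b) ^ q := by
  induction q with
  | zero => simp
  | succ q ih =>
    rw [show 2 * (q + 1) = 2 * q + 1 + 1 by ring, prod_range_succ, prod_range_succ, ih]
    simp [pow_succ, mul_assoc]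

namespace thetaGraph

variable {t ℓ q : ℕ}

def parity : Bool ⊕ Fin t × Fin (ℓ - 1) → Bool
  | .inl b => b
  | .inr (_, j) => decide (Even (j : ℕ))

theorem coloring_eq (ht : 0 < t) (hq : 0 < q) (C : (thetaGraph t (2 * q + 1)).Coloring Bool)
    (v : Bool ⊕ Fin t × Fin (2 * q + 1 - 1)) : C v = xor (C (.inl false)) (parity v) := by
  have hpath (i : Fin t) (j : ℕ) (hj : j < 2 * q + 1 - 1) :
      C (.inr (i, ⟨j, hj⟩)) = xor (C (.inl false)) (decide (Even j)) := by
    induction j with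
    | zero =>
      have := C.valid (v := .inl false) (w := .inr (i, ⟨0, hj⟩)) (by simp [thetaGraph])
      simpa [Bool.eq_not_iff] using this.symm
    | succ j ih =>
      have := C.valid (v := .inr (i, ⟨j, by omega⟩)) (w := .inr (i, ⟨j + 1, hj⟩))
        (by simp [thetaGraph])
      rw [ih] at this
      rw [Bool.eq_not_iff.2 this.symm]
      simp [Nat.even_add_one, -Nat.not_even_iff_odd]
  rcases v with (_ | _) | ⟨i, j⟩
  · simp [parity]
  · have := C.valid (v := .inl true) (w := .inr (⟨0, ht⟩, ⟨2 * q - 1, by omega⟩))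
      (by simp [thetaGraph])
    rw [hpath] at this
    have hodd : ¬ Even (2 * q - 1) := by rw [Nat.not_even_iff_odd]; exact ⟨q - 1, by omega⟩
    simpa [parity, hodd, Bool.eq_not_iff] using this
  · exact hpath i j j.2

lemma prod_parity {M : Type*} [CommMonoid M] (a b : M) :
    ∏ v : Bool ⊕ Fin t × Fin (2 * q + 1 - 1), (if parity v then a else b) =
      (a * b) ^ (1 + t * q) := by
  rw [Fintype.prod_sum_type, Fintype.prod_prod_type]
  simp only [parity, Fintype.prod_bool, if_true, decide_eq_true_eq]
  rw [Finset.prod_congr rfl fun i _ =>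
    Fin.prod_univ_eq_prod_range (fun j => if Even j then a else b) _]
  simp only [Nat.add_sub_cancel, prod_range_ite_even, prod_const, card_univ, Fintype.card_fin,
    Bool.false_eq_true, if_false]
  rw [← pow_mul, ← pow_succ', add_comm 1, mul_comm t]

theorem card_copy_completeBipartiteGraph_le (ht : 0 < t) (hq : 0 < q) (α β : Type*) [Fintype α]
    [Fintype β] :
    Nat.card ((thetaGraph t (2 * q + 1)).Copy (completeBipartiteGraph α β)) ≤
      2 * (Nat.card α * Nat.card β) ^ (1 + t * q) := by
  classical
  set P : ((Bool ⊕ Fin t × Fin (2 * q + 1 - 1)) → α ⊕ β) → Prop := fun φ =>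
    (∀ v, (φ v).isRight = parity v) ∨ ∀ v, (φ v).isRight = !parity v
  have hP (f : (thetaGraph t (2 * q + 1)).Copy (completeBipartiteGraph α β)) : P f := by
    have hC (v) : (f v).isRight = xor (f (.inl false)).isRight (parity v) :=
      coloring_eq ht hq ((SimpleGraph.CompleteBipartiteGraph.bicoloring α β).comp f.toHom) v
    cases h : (f (.inl false)).isRight
    · left; intro v; simpa [h] using hC v
    · right; intro v; simpa [h] using hC v
  calc Nat.card ((thetaGraph t (2 * q + 1)).Copy (completeBipartiteGraph α β))
      ≤ Nat.card {φ // P φ} := Nat.card_le_card_of_injective (fun f => ⟨f, hP f⟩)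
        fun f g h => SimpleGraph.Copy.ext fun a => congrFun (congrArg Subtype.val h) a
    _ ≤ _ := by
        rw [Nat.card_eq_fintype_card]
        refine (Fintype.card_subtype_or _ _).trans_eq ?_
        rw [Fintype.card_subtype_forall_isRight_eq, Fintype.card_subtype_forall_isRight_eq,
          prod_parity]
        simp only [Bool.not_eq_true', ← Bool.not_eq_true, ite_not, prod_parity,
          Nat.card_eq_fintype_card]
        ring

def pathEdge (i : Fin t) (j : Fin ℓ) : Sym2 (Bool ⊕ Fin t × Fin (ℓ - 1)) :=
  s(if h : (j : ℕ) = 0 then .inl false else .inr (i, ⟨j - 1, by have := j.2; omega⟩),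
    if h : (j : ℕ) = ℓ - 1 then .inl true else .inr (i, ⟨j, by have := j.2; omega⟩))

lemma pathEdge_mem_edgeSet (hℓ : 2 ≤ ℓ) (i : Fin t) (j : Fin ℓ) :
    pathEdge i j ∈ (thetaGraph t ℓ).edgeSet := by
  unfold pathEdge; split_ifs <;> simp [thetaGraph] <;> omega

lemma pathEdge_injective (hℓ : 2 ≤ ℓ) :
    Function.Injective fun x : Fin t × Fin ℓ => pathEdge x.1 x.2 := by
  rintro ⟨i, j⟩ ⟨i', j'⟩ h
  have := j.2; have := j'.2
  simp only [pathEdge, Sym2.eq_iff] at h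
  split_ifs at h <;> simp_all [Fin.ext_iff] <;> omega

lemma mul_le_card_edgeSet (hℓ : 2 ≤ ℓ) : t * ℓ ≤ Nat.card (thetaGraph t ℓ).edgeSet := by
  simpa using Nat.card_le_card_of_injective
    (fun x : Fin t × Fin ℓ =>
      (⟨pathEdge x.1 x.2, pathEdge_mem_edgeSet hℓ _ _⟩ : (thetaGraph t ℓ).edgeSet))
    fun x y h => pathEdge_injective hℓ (congrArg Subtype.val h)

end thetaGraph

lemma one_div_eight_mul_rpow_le {Z β : ℝ} (hZ : 0 < Z) {a e : ℕ} (he : 2 ≤ e)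
    (hβ : β * (e - 1) = a - 1) :
    1 / 8 * Z ^ (1 - β) ≤ Z * (Z ^ (-β) / 4) - 2 * Z ^ a * (Z ^ (-β) / 4) ^ e := by
  have hlin : Z * Z ^ (-β) = Z ^ (1 - β) := by
    rw [sub_eq_add_neg, Real.rpow_add hZ, Real.rpow_one]
  have hpow : Z ^ a * (Z ^ (-β)) ^ e = Z ^ (1 - β) := by
    rw [← Real.rpow_natCast, ← Real.rpow_natCast, ← Real.rpow_mul hZ.le, ← Real.rpow_add hZ]
    congr 1; linear_combination -hβ
  have hsplit : Z * (Z ^ (-β) / 4) - 2 * Z ^ a * (Z ^ (-β) / 4) ^ e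
      = Z ^ (1 - β) * (1 / 4 - 2 / 4 ^ e) := by
    calc _ = Z * Z ^ (-β) * (1 / 4) - 2 * (Z ^ a * (Z ^ (-β)) ^ e) / 4 ^ e := by
          rw [div_pow]; ring
      _ = _ := by rw [hlin, hpow]; ring
  have hconst : 2 / 4 ^ e ≤ (1 / 8 : ℝ) := by
    rw [div_le_iff₀ (by positivity)]
    calc (2 : ℝ) = 1 / 8 * 4 ^ 2 := by norm_num
      _ ≤ 1 / 8 * 4 ^ e := by gcongr; norm_num
  rw [hsplit, mul_comm]
  gcongr
  linarith

lemma add_one_div_two_mul_sub_le {ε : ℝ} (hε : 0 < ε) {t q : ℕ} (hq : 0 < q) (ht : 1 / ε ≤ t) :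
    (((2 * q + 1 : ℕ) : ℝ) + 1) / (2 * (2 * q + 1 : ℕ)) - ε ≤
      1 - t * q / (t * (2 * q + 1 : ℕ) - 1) := by
  push_cast
  have hq1 : (1 : ℝ) ≤ q := by exact_mod_cast hq
  have htε : 1 ≤ t * ε := by rwa [div_le_iff₀ hε] at ht
  have ht1 : (1 : ℝ) ≤ t :=
    Nat.one_le_cast.2 (Nat.cast_pos.1 ((one_div_pos.2 hε).trans_le ht))
  have hden : (t : ℝ) ≤ t * (2 * q + 1) - 1 := by nlinarith
  have hhalf : ((2 * q + 1 : ℝ) + 1) / (2 * (2 * q + 1)) = 1 - q / (2 * q + 1) := by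
    field_simp; ring
  have hql : (q : ℝ) / (2 * q + 1) ≤ 1 := by rw [div_le_one (by positivity)]; linarith
  have hsplit : (q : ℝ) / (2 * q + 1) * (t * (2 * q + 1) - 1) = t * q - q / (2 * q + 1) := by
    field_simp
  have key : t * q / (t * (2 * q + 1) - 1) ≤ (q : ℝ) / (2 * q + 1) + ε := by
    rw [div_le_iff₀ (by linarith), add_mul, hsplit]
    nlinarith
  rw [hhalf]
  linarith

lemma exists_one_div_eight_mul_rpow_le {ε : ℝ} (hε : 0 < ε) {t q : ℕ} (hq : 0 < q)
    (ht : 1 / ε ≤ t) {Z : ℝ} (hZ : 1 ≤ Z) :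
    ∃ p : ℝ, 0 ≤ p ∧ p ≤ 1 ∧
      1 / 8 * Z ^ ((((2 * q + 1 : ℕ) : ℝ) + 1) / (2 * (2 * q + 1 : ℕ)) - ε) ≤
        Z * p - 2 * Z ^ (1 + t * q) * p ^ (t * (2 * q + 1)) := by
  have ht0 : 0 < t := Nat.cast_pos.1 ((one_div_pos.2 hε).trans_le ht)
  have hden : (0 : ℝ) < t * (2 * q + 1 : ℕ) - 1 := by
    have : (3 : ℝ) ≤ t * (2 * q + 1 : ℕ) := by exact_mod_cast (by nlinarith : 3 ≤ t * (2 * q + 1))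
    linarith
  set β : ℝ := t * q / (t * (2 * q + 1 : ℕ) - 1)
  have hβ : β * ((t * (2 * q + 1) : ℕ) - 1) = (1 + t * q : ℕ) - 1 := by
    rw [Nat.cast_mul, div_mul_cancel₀ _ hden.ne']; push_cast; ring
  have hZβ : Z ^ (-β) ≤ 1 :=
    Real.rpow_le_one_of_one_le_of_nonpos hZ (neg_nonpos.2 (div_nonneg (by positivity) hden.le))
  refine ⟨Z ^ (-β) / 4, by positivity, by linarith, ?_⟩
  calc 1 / 8 * Z ^ ((((2 * q + 1 : ℕ) : ℝ) + 1) / (2 * (2 * q + 1 : ℕ)) - ε)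
      ≤ 1 / 8 * Z ^ (1 - β) := by
        gcongr 1 / 8 * ?_
        exact Real.rpow_le_rpow_of_exponent_le hZ (add_one_div_two_mul_sub_le hε hq ht)
    _ ≤ _ := one_div_eight_mul_rpow_le (by positivity) (by nlinarith) hβ

/-- For every `ε > 0` and odd `ℓ ≥ 2` there is `t₀` so that for `t ≥ t₀` and all
sufficiently large `m ≤ n` there is an `m` by `n` bipartite `θ_{t,ℓ}`-free graph with at
least `c (mn)^{(ℓ+1)/(2ℓ) − ε}` edges, i.e. `z(m,n,θ_{t,ℓ}) ≥ c (mn)^{(ℓ+1)/(2ℓ) − ε}`. -/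
theorem stmt_15 (ε : ℝ) (hε : 0 < ε) (ℓ : ℕ) (hℓ : 2 ≤ ℓ) (hodd : Odd ℓ) :
    ∃ t₀ : ℕ, ∀ t : ℕ, t₀ ≤ t → ∃ c : ℝ, 0 < c ∧ ∃ N : ℕ, ∀ m n : ℕ, N ≤ m → m ≤ n →
      ∃ G : SimpleGraph (Fin m ⊕ Fin n),
        (∀ i j : Fin m, ¬ G.Adj (Sum.inl i) (Sum.inl j)) ∧
        (∀ i j : Fin n, ¬ G.Adj (Sum.inr i) (Sum.inr j)) ∧
        ¬ ContainsCopy (thetaGraph t ℓ) G ∧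
        c * ((m : ℝ) * n) ^ (((ℓ : ℝ) + 1) / (2 * ℓ) - ε) ≤ (G.edgeSet.ncard : ℝ) := by
  obtain ⟨q, rfl⟩ := hodd
  have hq : 0 < q := by omega
  refine ⟨⌈1 / ε⌉₊ + 1, fun t ht => ⟨1 / 8, by norm_num, 1, fun m n hm hmn => ?_⟩⟩
  have ht0 : 0 < t := by omega
  have htε : 1 / ε ≤ t := (Nat.le_ceil _).trans (by exact_mod_cast (Nat.le_succ _).trans ht)
  have hZ : (1 : ℝ) ≤ m * n := one_le_mul_of_one_le_of_one_le (by exact_mod_cast hm)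
    (by exact_mod_cast hm.trans hmn)
  obtain ⟨p, hp0, hp1, hp⟩ := exists_one_div_eight_mul_rpow_le hε hq htε hZ
  obtain ⟨G, hGK, hfree, hG⟩ := SimpleGraph.exists_free_le_ncard_edgeSet_ge
    (thetaGraph t (2 * q + 1)) (completeBipartiteGraph (Fin m) (Fin n)) (by positivity)
    (thetaGraph.mul_le_card_edgeSet (by omega)) hp0 hp1
  have hcopies := thetaGraph.card_copy_completeBipartiteGraph_le ht0 hq (Fin m) (Fin n)
  rw [Nat.card_fin, Nat.card_fin] at hcopies
  refine ⟨G, fun i j h => by simpa using hGK h, fun i j h => by simpa using hGK h,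
    fun ⟨f, hf, hadj⟩ => hfree ⟨⟨⟨f, hadj _ _⟩, hf⟩⟩, hp.trans (le_trans ?_ hG)⟩
  rw [SimpleGraph.natCard_edgeSet_completeBipartiteGraph, Nat.card_fin, Nat.card_fin]
  push_cast
  gcongr
  exact_mod_cast hcopies
end
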